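/- arXiv:2412.04970 — 7 statements merged into one kernel-verified Lean document; each statement's English description precedes it below -/
import Mathlib

section
/- Let (U, 𝒮) be a laminar set system, let S be a set of non-singleton members of 𝒮, and let (π, σ) be a pair of injections from S to U identifying S with unique request. Then for each a ∈ π(S), the member s = π⁻¹(a) of S is the least ancestor of a belonging to S; that is, a ∈ s and every s′ ∈ S with a ∈ s′ satisfies s ⊆ s′. -/
variable {α : Type*} [DecidableEq α] [Fintype α]

/-- A set system on the finite universe `α`: `∅ ∉ 𝒮`, `univ ∈ 𝒮`, all singletons in `𝒮`. -/
def IsSetSystem (𝒮 : Finset (Finset α)) : Prop :=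
  (∅ : Finset α) ∉ 𝒮 ∧ Finset.univ ∈ 𝒮 ∧ ∀ a : α, ({a} : Finset α) ∈ 𝒮

/-- Two sets overlap: non-disjoint and neither contains the other. -/
def Overlap (X Y : Finset α) : Prop :=
  (X ∩ Y).Nonempty ∧ ¬ X ⊆ Y ∧ ¬ Y ⊆ X

/-- A set system is laminar when no two members overlap. -/
def IsLaminar (𝒮 : Finset (Finset α)) : Prop :=
  ∀ X ∈ 𝒮, ∀ Y ∈ 𝒮, ¬ Overlap X Y

/-- `c` is a child of `x` in the laminar tree: a ⊆-maximal proper subset of `x` in `𝒮`. -/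
def IsChild (𝒮 : Finset (Finset α)) (c x : Finset α) : Prop :=
  c ∈ 𝒮 ∧ c ⊂ x ∧ ∀ y ∈ 𝒮, y ⊂ x → c ⊆ y → y = c

/-- `p` is the parent of `x`: the ⊆-minimal member of `𝒮` properly containing `x`. -/
def IsParent (𝒮 : Finset (Finset α)) (p x : Finset α) : Prop :=
  p ∈ 𝒮 ∧ x ⊂ p ∧ ∀ y ∈ 𝒮, x ⊂ y → p ⊆ y

/-- `(π, σ)` identifies `S`: a pair of injections on `S` such that each `s ∈ S` is the
⊆-minimal member of `𝒮` containing both `π s` and `σ s`. -/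
def Identifies (𝒮 S : Finset (Finset α)) (π σ : Finset α → α) : Prop :=
  Set.InjOn π ↑S ∧ Set.InjOn σ ↑S ∧
  ∀ s ∈ S, π s ∈ s ∧ σ s ∈ s ∧ ∀ y ∈ 𝒮, π s ∈ y → σ s ∈ y → s ⊆ y

/-- `x` is `s`-requested in `(π, σ)` (for `s ∈ S`): `x ⊆ s` and `π s ∈ x` or `σ s ∈ x`. -/
def Requested (S : Finset (Finset α)) (π σ : Finset α → α) (s x : Finset α) : Prop :=
  s ∈ S ∧ x ⊆ s ∧ (π s ∈ x ∨ σ s ∈ x)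

/-- `(π, σ)` has unique request: every member of `𝒮` is `s`-requested for at most one `s ∈ S`. -/
def UniqueRequest (𝒮 S : Finset (Finset α)) (π σ : Finset α → α) : Prop :=
  ∀ x ∈ 𝒮, ∀ s s' : Finset α,
    Requested S π σ s x → Requested S π σ s' x → s = s'

/-- The bi-colouring `(A, B)` (disjoint, equal cardinality) identifies `S`. -/
def BicolIdentifies (𝒮 S : Finset (Finset α)) (A B : Finset α) : Prop :=
  Disjoint A B ∧ A.card = B.card ∧
  ∃ π σ : Finset α → α, Identifies 𝒮 S π σ ∧ UniqueRequest 𝒮 S π σ ∧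
    S.image π = A ∧ S.image σ = B

/-- `X` is a thin set of inner nodes: for every non-root `x ∈ X`, the parent of `x` is not
in `X` and `x` has a sibling not in `X`. -/
def Thin (𝒮 X : Finset (Finset α)) : Prop :=
  ∀ x ∈ X, x ≠ Finset.univ →
    (∀ p : Finset α, IsParent 𝒮 p x → p ∉ X) ∧
    ∃ y p : Finset α, y ≠ x ∧ IsChild 𝒮 x p ∧ IsChild 𝒮 y p ∧ y ∉ X

theorem IsLaminar.subset_or_subset {β : Type*} [DecidableEq β] {𝒮 : Finset (Finset β)}
    (hlam : IsLaminar 𝒮) {X Y : Finset β} (hX : X ∈ 𝒮) (hY : Y ∈ 𝒮) {a : β} (haX : a ∈ X)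
    (haY : a ∈ Y) : X ⊆ Y ∨ Y ⊆ X := by
  by_contra! h
  exact hlam X hX Y hY ⟨⟨a, Finset.mem_inter.2 ⟨haX, haY⟩⟩, h.1, h.2⟩

theorem UniqueRequest.eq_of_subset_of_mem {β : Type*} {𝒮 S : Finset (Finset β)}
    {π σ : Finset β → β} (hur : UniqueRequest 𝒮 S π σ) {s t : Finset β} (hs : s ∈ S) (ht : t ∈ S)
    (ht𝒮 : t ∈ 𝒮) (hπt : π t ∈ t) (hts : t ⊆ s) (hπs : π s ∈ t) : s = t :=
  hur t ht𝒮 s t ⟨hs, hts, Or.inl hπs⟩ ⟨ht, subset_rfl, Or.inl hπt⟩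

theorem stmt_5_general (𝒮 : Finset (Finset α)) (hlam : IsLaminar 𝒮)
    (S : Finset (Finset α)) (hS : ∀ x ∈ S, x ∈ 𝒮 ∧ ∀ a : α, x ≠ {a})
    (π σ : Finset α → α) (hid : Identifies 𝒮 S π σ) (hur : UniqueRequest 𝒮 S π σ) :
    ∀ s ∈ S, π s ∈ s ∧ ∀ s' ∈ S, π s ∈ s' → s ⊆ s' := by
  intro s hs
  have hπs : π s ∈ s := (hid.2.2 s hs).1
  refine ⟨hπs, fun s' hs' hπs' => ?_⟩
  rcases hlam.subset_or_subset (hS s hs).1 (hS s' hs').1 hπs hπs' with hss' | hs's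
  · exact hss'
  · rw [hur.eq_of_subset_of_mem hs hs' (hS s' hs').1 (hid.2.2 s' hs').1 hs's hπs']

/-- If `(π, σ)` identifies `S` with unique request, then for each `s ∈ S`, `s` is the least
member of `S` containing `π s` (the least ancestor of `π s` that belongs to `S`). -/
theorem stmt_5 (𝒮 : Finset (Finset α)) (hsys : IsSetSystem 𝒮) (hlam : IsLaminar 𝒮)
    (S : Finset (Finset α)) (hS : ∀ x ∈ S, x ∈ 𝒮 ∧ ∀ a : α, x ≠ {a})
    (π σ : Finset α → α) (hid : Identifies 𝒮 S π σ) (hur : UniqueRequest 𝒮 S π σ) :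
    ∀ s ∈ S, π s ∈ s ∧ ∀ s' ∈ S, π s ∈ s' → s ⊆ s' :=
  stmt_5_general 𝒮 hlam S hS π σ hid hur
end

section
/- Let (U, 𝒮) be a laminar set system, let S be a set of non-singleton members of 𝒮, and let (A, B) be a bi-colouring identifying S. Then for every non-singleton member x ∈ 𝒮, we have x ∈ S if and only if there exist a ∈ A ∩ x and b ∈ B ∩ x such that for every child c of x, |(A ∖ {a}) ∩ c| = |(B ∖ {b}) ∩ c| and not ({a, b} ⊆ c). -/
variable {α : Type*} [DecidableEq α] [Fintype α]

lemma lam_comp {𝒮 : Finset (Finset α)} (hlam : IsLaminar 𝒮) {X Y : Finset α}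
    (hX : X ∈ 𝒮) (hY : Y ∈ 𝒮) (h : (X ∩ Y).Nonempty) : X ⊆ Y ∨ Y ⊆ X := by
  by_contra hc
  push_neg at hc
  exact hlam X hX Y hY ⟨h, hc.1, hc.2⟩

lemma exists_child' {𝒮 : Finset (Finset α)} (hsys : IsSetSystem 𝒮)
    {x : Finset α} (hx : x ∈ 𝒮) (hns : ∀ a : α, x ≠ {a}) {u : α} (hu : u ∈ x) :
    ∃ c, IsChild 𝒮 c x ∧ u ∈ c := by
  classical
  set T := 𝒮.filter (fun y => u ∈ y ∧ y ⊂ x) with hT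
  have hsing : ({u} : Finset α) ∈ T := by
    refine Finset.mem_filter.mpr ⟨hsys.2.2 u, Finset.mem_singleton_self u, ?_⟩
    refine Finset.ssubset_iff_subset_ne.mpr
      ⟨Finset.singleton_subset_iff.mpr hu, fun h => hns u h.symm⟩
  obtain ⟨c, hcT, hmax⟩ := T.exists_max_image (fun y => y.card) ⟨_, hsing⟩
  rw [hT, Finset.mem_filter] at hcT
  refine ⟨c, ⟨hcT.1, hcT.2.2, ?_⟩, hcT.2.1⟩
  intro y hy hyx hcy
  have hyT : y ∈ T := Finset.mem_filter.mpr ⟨hy, hcy hcT.2.1, hyx⟩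
  exact (Finset.eq_of_subset_of_card_le hcy (hmax y hyT)).symm

lemma card_inter_image {S : Finset (Finset α)} {π : Finset α → α}
    (hinj : Set.InjOn π ↑S) (hmem : ∀ s ∈ S, π s ∈ s) (c : Finset α) :
    (S.image π ∩ c).card
      = (S.filter (fun s => s ⊆ c)).card
        + (S.filter (fun s => π s ∈ c ∧ ¬ s ⊆ c)).card := by
  classical
  have h1 : S.image π ∩ c = (S.filter (fun s => π s ∈ c)).image π := by
    ext y
    simp only [Finset.mem_inter, Finset.mem_image, Finset.mem_filter]
    constructor
    · rintro ⟨⟨s, hs, rfl⟩, hy⟩; exact ⟨s, ⟨hs, hy⟩, rfl⟩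
    · rintro ⟨s, ⟨hs, hy⟩, rfl⟩; exact ⟨⟨s, hs, rfl⟩, hy⟩
  have h2 : S.filter (fun s => π s ∈ c)
      = (S.filter (fun s => s ⊆ c)) ∪ (S.filter (fun s => π s ∈ c ∧ ¬ s ⊆ c)) := by
    ext s
    simp only [Finset.mem_filter, Finset.mem_union]
    constructor
    · rintro ⟨hs, hπ⟩
      by_cases hsc : s ⊆ c
      · exact Or.inl ⟨hs, hsc⟩
      · exact Or.inr ⟨hs, hπ, hsc⟩
    · rintro (⟨hs, hsc⟩ | ⟨hs, hπ, _⟩)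
      · exact ⟨hs, hsc (hmem s hs)⟩
      · exact ⟨hs, hπ⟩
  have hdisj : Disjoint (S.filter (fun s => s ⊆ c))
      (S.filter (fun s => π s ∈ c ∧ ¬ s ⊆ c)) := by
    rw [Finset.disjoint_left]
    intro s hs hs'
    exact (Finset.mem_filter.mp hs').2.2 (Finset.mem_filter.mp hs).2
  rw [h1, Finset.card_image_of_injOn
    (hinj.mono (Finset.coe_subset.mpr (Finset.filter_subset _ _))), h2,
    Finset.card_union_of_disjoint hdisj]

lemma sdiff_inter_eq' (A c : Finset α) (a : α) : (A \ {a}) ∩ c = (A ∩ c) \ {a} := by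
  ext y
  simp only [Finset.mem_inter, Finset.mem_sdiff, Finset.mem_singleton]
  tauto

lemma sdiff_inter_of_notMem' {c : Finset α} {a : α} (h : a ∉ c) (A : Finset α) :
    (A \ {a}) ∩ c = A ∩ c := by
  ext y
  simp only [Finset.mem_inter, Finset.mem_sdiff, Finset.mem_singleton]
  constructor
  · tauto
  · rintro ⟨h1, h2⟩
    exact ⟨⟨h1, fun hy => h (hy ▸ h2)⟩, h2⟩

/-- Characterization of membership in `S` from a bi-colouring `(A, B)` identifying `S`:
`x ∈ S` iff there are `a ∈ A ∩ x` and `b ∈ B ∩ x` such that for every child `c` of `x`,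
`|(A ∖ {a}) ∩ c| = |(B ∖ {b}) ∩ c|` and not `{a, b} ⊆ c`. -/
theorem stmt_7 (𝒮 : Finset (Finset α)) (hsys : IsSetSystem 𝒮) (hlam : IsLaminar 𝒮)
    (S : Finset (Finset α)) (hS : ∀ x ∈ S, x ∈ 𝒮 ∧ ∀ a : α, x ≠ {a})
    (A B : Finset α) (hAB : BicolIdentifies 𝒮 S A B)
    (x : Finset α) (hx : x ∈ 𝒮) (hns : ∀ a : α, x ≠ {a}) :
    x ∈ S ↔ ∃ a ∈ A ∩ x, ∃ b ∈ B ∩ x, ∀ c : Finset α, IsChild 𝒮 c x →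
      ((A \ {a}) ∩ c).card = ((B \ {b}) ∩ c).card ∧ ¬ ({a, b} : Finset α) ⊆ c := by
  classical
  obtain ⟨hdisj, hcardAB, π, σ, ⟨hπinj, hσinj, hid3⟩, huniq, hA, hB⟩ := hAB
  have hAc : ∀ c : Finset α, (A ∩ c).card
      = (S.filter (fun s => s ⊆ c)).card
        + (S.filter (fun s => π s ∈ c ∧ ¬ s ⊆ c)).card := by
    intro c
    rw [← hA]
    exact card_inter_image hπinj (fun s hs => (hid3 s hs).1) c
  have hBc : ∀ c : Finset α, (B ∩ c).card
      = (S.filter (fun s => s ⊆ c)).card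
        + (S.filter (fun s => σ s ∈ c ∧ ¬ s ⊆ c)).card := by
    intro c
    rw [← hB]
    exact card_inter_image hσinj (fun s hs => (hid3 s hs).2.1) c
  constructor
  · -- forward direction
    intro hxS
    have hπx : π x ∈ x := (hid3 x hxS).1
    have hσx : σ x ∈ x := (hid3 x hxS).2.1
    refine ⟨π x, Finset.mem_inter.mpr ⟨hA ▸ Finset.mem_image_of_mem π hxS, hπx⟩,
      σ x, Finset.mem_inter.mpr ⟨hB ▸ Finset.mem_image_of_mem σ hxS, hσx⟩, ?_⟩
    intro c hc
    obtain ⟨hc𝒮, hcx, hcmax⟩ := hc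
    have hxnc : ¬ x ⊆ c := fun h => hcx.ne (Finset.Subset.antisymm hcx.1 h)
    have hnotboth : ¬ (π x ∈ c ∧ σ x ∈ c) := by
      rintro ⟨h1, h2⟩
      exact hxnc ((hid3 x hxS).2.2 c hc𝒮 h1 h2)
    -- every requester of c is x itself
    have hreq : ∀ s ∈ S, ¬ s ⊆ c → (π s ∈ c ∨ σ s ∈ c) → s = x := by
      intro s hsS hnsub hin
      have hs𝒮 := (hS s hsS).1
      have hne : (s ∩ c).Nonempty := by
        rcases hin with h | h
        · exact ⟨π s, Finset.mem_inter.mpr ⟨(hid3 s hsS).1, h⟩⟩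
        · exact ⟨σ s, Finset.mem_inter.mpr ⟨(hid3 s hsS).2.1, h⟩⟩
      have hcs : c ⊆ s := (lam_comp hlam hs𝒮 hc𝒮 hne).resolve_left hnsub
      have hsx : (s ∩ x).Nonempty := by
        obtain ⟨u, hu⟩ := hne
        rw [Finset.mem_inter] at hu
        exact ⟨u, Finset.mem_inter.mpr ⟨hu.1, hcx.1 hu.2⟩⟩
      rcases lam_comp hlam hs𝒮 hx hsx with hsub | hsub
      · rcases eq_or_ne s x with h | hne'
        · exact h
        · exact absurd (le_of_eq (hcmax s hs𝒮 (ssubset_of_subset_of_ne hsub hne') hcs))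
            hnsub
      · have hreqs : Requested S π σ s x := by
          refine ⟨hsS, hsub, ?_⟩
          rcases hin with h | h
          · exact Or.inl (hcx.1 h)
          · exact Or.inr (hcx.1 h)
        exact huniq x hx s x hreqs ⟨hxS, Finset.Subset.refl x, Or.inl hπx⟩
    constructor
    · -- the cardinality equality
      by_cases h1 : π x ∈ c
      · have h2 : σ x ∉ c := fun h => hnotboth ⟨h1, h⟩
        have hSπ : S.filter (fun s => π s ∈ c ∧ ¬ s ⊆ c) = {x} := by
          ext s
          simp only [Finset.mem_filter, Finset.mem_singleton]
          constructor
          · rintro ⟨hs, hπ, hns'⟩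
            exact hreq s hs hns' (Or.inl hπ)
          · rintro rfl
            exact ⟨hxS, h1, hxnc⟩
        have hSσ : S.filter (fun s => σ s ∈ c ∧ ¬ s ⊆ c) = ∅ := by
          rw [Finset.eq_empty_iff_forall_notMem]
          intro s hs
          rw [Finset.mem_filter] at hs
          obtain ⟨hs1, hs2, hs3⟩ := hs
          exact h2 ((hreq s hs1 hs3 (Or.inr hs2)) ▸ hs2)
        have ha : π x ∈ A ∩ c :=
          Finset.mem_inter.mpr ⟨hA ▸ Finset.mem_image_of_mem π hxS, h1⟩
        rw [sdiff_inter_eq', sdiff_inter_of_notMem' h2,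
          Finset.card_sdiff_of_subset (Finset.singleton_subset_iff.mpr ha)]
        simp only [Finset.card_singleton]
        have e1 := hAc c
        have e2 := hBc c
        rw [hSπ] at e1
        rw [hSσ] at e2
        simp only [Finset.card_singleton, Finset.card_empty] at e1 e2
        omega
      · by_cases h2 : σ x ∈ c
        · have hSσ : S.filter (fun s => σ s ∈ c ∧ ¬ s ⊆ c) = {x} := by
            ext s
            simp only [Finset.mem_filter, Finset.mem_singleton]
            constructor
            · rintro ⟨hs, hσ, hns'⟩
              exact hreq s hs hns' (Or.inr hσ)
            · rintro rfl
              exact ⟨hxS, h2, hxnc⟩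
          have hSπ : S.filter (fun s => π s ∈ c ∧ ¬ s ⊆ c) = ∅ := by
            rw [Finset.eq_empty_iff_forall_notMem]
            intro s hs
            rw [Finset.mem_filter] at hs
            obtain ⟨hs1, hs2, hs3⟩ := hs
            exact h1 ((hreq s hs1 hs3 (Or.inl hs2)) ▸ hs2)
          have hb : σ x ∈ B ∩ c :=
            Finset.mem_inter.mpr ⟨hB ▸ Finset.mem_image_of_mem σ hxS, h2⟩
          rw [sdiff_inter_of_notMem' h1, sdiff_inter_eq',
            Finset.card_sdiff_of_subset (Finset.singleton_subset_iff.mpr hb)]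
          simp only [Finset.card_singleton]
          have e1 := hAc c
          have e2 := hBc c
          rw [hSπ] at e1
          rw [hSσ] at e2
          simp only [Finset.card_singleton, Finset.card_empty] at e1 e2
          omega
        · have hSπ : S.filter (fun s => π s ∈ c ∧ ¬ s ⊆ c) = ∅ := by
            rw [Finset.eq_empty_iff_forall_notMem]
            intro s hs
            rw [Finset.mem_filter] at hs
            obtain ⟨hs1, hs2, hs3⟩ := hs
            exact h1 ((hreq s hs1 hs3 (Or.inl hs2)) ▸ hs2)
          have hSσ : S.filter (fun s => σ s ∈ c ∧ ¬ s ⊆ c) = ∅ := by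
            rw [Finset.eq_empty_iff_forall_notMem]
            intro s hs
            rw [Finset.mem_filter] at hs
            obtain ⟨hs1, hs2, hs3⟩ := hs
            exact h2 ((hreq s hs1 hs3 (Or.inr hs2)) ▸ hs2)
          rw [sdiff_inter_of_notMem' h1, sdiff_inter_of_notMem' h2]
          have e1 := hAc c
          have e2 := hBc c
          rw [hSπ] at e1
          rw [hSσ] at e2
          simp only [Finset.card_empty] at e1 e2
          omega
    · -- ¬ {πx, σx} ⊆ c
      intro hsub
      rw [Finset.insert_subset_iff, Finset.singleton_subset_iff] at hsub
      exact hnotboth hsub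
  · -- backward direction
    rintro ⟨a, ha, b, hb, hcond⟩
    by_contra hxS
    rw [Finset.mem_inter] at ha hb
    obtain ⟨ca, hca, haca⟩ := exists_child' hsys hx hns ha.2
    obtain ⟨cb, hcb, hbcb⟩ := exists_child' hsys hx hns hb.2
    have hbna : b ∉ ca := fun h => (hcond ca hca).2
      (Finset.insert_subset haca (Finset.singleton_subset_iff.mpr h))
    have hanb : a ∉ cb := fun h => (hcond cb hcb).2
      (Finset.insert_subset h (Finset.singleton_subset_iff.mpr hbcb))
    -- any requester of a child of x contains x
    have hreq : ∀ c : Finset α, IsChild 𝒮 c x → ∀ s ∈ S, ¬ s ⊆ c →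
        (π s ∈ c ∨ σ s ∈ c) → x ⊆ s := by
      intro c hc s hsS hnsub hin
      obtain ⟨hc𝒮, hcx, hcmax⟩ := hc
      have hs𝒮 := (hS s hsS).1
      have hne : (s ∩ c).Nonempty := by
        rcases hin with h | h
        · exact ⟨π s, Finset.mem_inter.mpr ⟨(hid3 s hsS).1, h⟩⟩
        · exact ⟨σ s, Finset.mem_inter.mpr ⟨(hid3 s hsS).2.1, h⟩⟩
      have hcs : c ⊆ s := (lam_comp hlam hs𝒮 hc𝒮 hne).resolve_left hnsub
      have hsx : (s ∩ x).Nonempty := by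
        obtain ⟨u, hu⟩ := hne
        rw [Finset.mem_inter] at hu
        exact ⟨u, Finset.mem_inter.mpr ⟨hu.1, hcx.1 hu.2⟩⟩
      rcases lam_comp hlam hs𝒮 hx hsx with hsub | hsub
      · exfalso
        rcases eq_or_ne s x with rfl | hne'
        · exact hxS hsS
        · exact hnsub (le_of_eq (hcmax s hs𝒮 (ssubset_of_subset_of_ne hsub hne') hcs))
      · exact hsub
    -- count at c_a gives a π-requester
    have haA : a ∈ A ∩ ca := Finset.mem_inter.mpr ⟨ha.1, haca⟩
    have eA := hAc ca
    have eB := hBc ca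
    have hcnt := (hcond ca hca).1
    rw [sdiff_inter_eq', sdiff_inter_of_notMem' hbna,
      Finset.card_sdiff_of_subset (Finset.singleton_subset_iff.mpr haA)] at hcnt
    simp only [Finset.card_singleton] at hcnt
    have hApos : 1 ≤ (A ∩ ca).card := Finset.card_pos.mpr ⟨a, haA⟩
    have hrπ : 0 < (S.filter (fun s => π s ∈ ca ∧ ¬ s ⊆ ca)).card := by omega
    obtain ⟨s₀, hs₀⟩ := Finset.card_pos.mp hrπ
    rw [Finset.mem_filter] at hs₀
    obtain ⟨hs₀S, hπs₀, hns₀⟩ := hs₀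
    -- count at c_b gives a σ-requester
    have hbB : b ∈ B ∩ cb := Finset.mem_inter.mpr ⟨hb.1, hbcb⟩
    have eA' := hAc cb
    have eB' := hBc cb
    have hcnt' := (hcond cb hcb).1
    rw [sdiff_inter_of_notMem' hanb, sdiff_inter_eq',
      Finset.card_sdiff_of_subset (Finset.singleton_subset_iff.mpr hbB)] at hcnt'
    simp only [Finset.card_singleton] at hcnt'
    have hBpos : 1 ≤ (B ∩ cb).card := Finset.card_pos.mpr ⟨b, hbB⟩
    have hrσ : 0 < (S.filter (fun s => σ s ∈ cb ∧ ¬ s ⊆ cb)).card := by omega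
    obtain ⟨s₁, hs₁⟩ := Finset.card_pos.mp hrσ
    rw [Finset.mem_filter] at hs₁
    obtain ⟨hs₁S, hσs₁, hns₁⟩ := hs₁
    -- both request x, hence equal; then minimality forces s₀ ⊆ x, so x ∈ S
    have hxs₀ : x ⊆ s₀ := hreq ca hca s₀ hs₀S hns₀ (Or.inl hπs₀)
    have hxs₁ : x ⊆ s₁ := hreq cb hcb s₁ hs₁S hns₁ (Or.inr hσs₁)
    have h01 : s₀ = s₁ := huniq x hx s₀ s₁
      ⟨hs₀S, hxs₀, Or.inl (hca.2.1.1 hπs₀)⟩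
      ⟨hs₁S, hxs₁, Or.inr (hcb.2.1.1 hσs₁)⟩
    have hsub : s₀ ⊆ x := (hid3 s₀ hs₀S).2.2 x hx (hca.2.1.1 hπs₀)
      (h01 ▸ hcb.2.1.1 hσs₁)
    exact hxS ((Finset.Subset.antisymm hsub hxs₀) ▸ hs₀S)
end

section
/- Let (U, 𝒮) be a laminar set system, let S be a set of non-singleton members of 𝒮, and let (π, σ) be a pair of injections from S to U identifying S with unique request; set A = π(S) and B = σ(S). Then for every non-singleton member x ∈ 𝒮 with x ∉ S, exactly one of the following holds: (1) x is not s-requested in (π, σ) for any s ∈ S, and for every child c of x, |A ∩ c| = |B ∩ c|; or (2) x is s-requested in (π, σ) for some s ∈ S, and there exists a single leaf z ∈ (A ∪ B) ∩ x such that for every child c of x, |(A ∖ {z}) ∩ c| = |(B ∖ {z}) ∩ c|. -/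
variable {α : Type*} [DecidableEq α] [Fintype α]

/-!
Fix a child `c` of `x`. By laminarity, a member `s ∈ S` with `π s ∈ c` or `σ s ∈ c` either lies
inside `c` or contains `x`, and in the latter case `x` is `s`-requested. If `x` is not requested,
`A ∩ c` and `B ∩ c` are therefore the images under `π` and `σ` of the same set
`{s ∈ S | s ⊆ c}`, so they have the same size. If `x` is `s₀`-requested, unique request makes `s₀`
the only exception, and exactly one of `π s₀`, `σ s₀` lies in `x` (both would force `x = s₀ ∈ S`);
removing that leaf `z` restores the bijection.
-/

open Finset

lemma card_eq_of_mem_iff {ι β : Type*} [DecidableEq β] {S : Finset ι} {π σ : ι → β}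
    (hπ : Set.InjOn π S) (hσ : Set.InjOn σ S) {X Y : Finset β}
    (hXS : X ⊆ S.image π) (hYS : Y ⊆ S.image σ) (p : ι → Prop) [DecidablePred p]
    (hX : ∀ s ∈ S, π s ∈ X ↔ p s) (hY : ∀ s ∈ S, σ s ∈ Y ↔ p s) :
    X.card = Y.card := by
  have image_filter {f : ι → β} {Z : Finset β} (hZS : Z ⊆ S.image f)
      (hZ : ∀ s ∈ S, f s ∈ Z ↔ p s) : Z = (S.filter p).image f := by
    ext a
    simp only [mem_image, mem_filter]
    constructor
    · intro ha
      obtain ⟨s, hs, rfl⟩ := mem_image.1 (hZS ha)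
      exact ⟨s, ⟨hs, (hZ s hs).1 ha⟩, rfl⟩
    · rintro ⟨s, ⟨hs, hps⟩, rfl⟩
      exact (hZ s hs).2 hps
  have hsub : ↑(S.filter p) ⊆ (↑S : Set ι) := coe_subset.2 (filter_subset _ _)
  rw [image_filter hXS hX, image_filter hYS hY, card_image_of_injOn (hπ.mono hsub),
    card_image_of_injOn (hσ.mono hsub)]

lemma xor_not_and_and {P Q R : Prop} (hQ : ¬P → Q) (hR : P → R) : Xor (¬P ∧ Q) (P ∧ R) := by
  by_cases hP : P <;> simp [Xor, hP, hQ, hR]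

section

omit [DecidableEq α] [Fintype α]

variable {𝒮 S : Finset (Finset α)} {π σ : Finset α → α}

lemma IsLaminar.subset_or_subset_of_mem [DecidableEq α]
    (hlam : IsLaminar 𝒮) {X Y : Finset α} (hX : X ∈ 𝒮)
    (hY : Y ∈ 𝒮) {a : α} (haX : a ∈ X) (haY : a ∈ Y) : X ⊆ Y ∨ Y ⊆ X := by
  by_contra! h
  exact hlam X hX Y hY ⟨⟨a, mem_inter.2 ⟨haX, haY⟩⟩, h.1, h.2⟩

lemma IsLaminar.subset_child_of_mem [DecidableEq α]
    (hlam : IsLaminar 𝒮) {c x s : Finset α} (hx : x ∈ 𝒮)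
    (hc : IsChild 𝒮 c x) (hs : s ∈ 𝒮) {a : α} (has : a ∈ s) (hac : a ∈ c) (hxs : ¬ x ⊆ s) :
    s ⊆ c := by
  rcases hlam.subset_or_subset_of_mem hs hc.1 has hac with hsc | hcs
  · exact hsc
  rcases hlam.subset_or_subset_of_mem hs hx has (hc.2.1.subset hac) with hsx | hxs'
  · exact (hc.2.2 s hs (hsx.ssubset_of_ne (by rintro rfl; exact hxs le_rfl)) hcs).le
  · exact absurd hxs' hxs

lemma Identifies.swap (hid : Identifies 𝒮 S π σ) : Identifies 𝒮 S σ π :=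
  ⟨hid.2.1, hid.1, fun s hs =>
    ⟨(hid.2.2 s hs).2.1, (hid.2.2 s hs).1, fun y hy h1 h2 => (hid.2.2 s hs).2.2 y hy h2 h1⟩⟩

lemma Requested.swap {s x : Finset α} (h : Requested S π σ s x) : Requested S σ π s x :=
  ⟨h.1, h.2.1, h.2.2.symm⟩

lemma UniqueRequest.swap (hur : UniqueRequest 𝒮 S π σ) : UniqueRequest 𝒮 S σ π :=
  fun y hy s s' h h' => hur y hy s s' h.swap h'.swap

lemma Identifies.subset_child_or_requested [DecidableEq α]
    (hid : Identifies 𝒮 S π σ) (hlam : IsLaminar 𝒮)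
    (hS𝒮 : S ⊆ 𝒮) {c x s : Finset α} (hx : x ∈ 𝒮) (hc : IsChild 𝒮 c x) (hs : s ∈ S)
    (h : π s ∈ c ∨ σ s ∈ c) : s ⊆ c ∨ Requested S π σ s x := by
  by_cases hxs : x ⊆ s
  · exact Or.inr ⟨hs, hxs, h.imp (hc.2.1.subset ·) (hc.2.1.subset ·)⟩
  · obtain ⟨hπs, hσs, -⟩ := hid.2.2 s hs
    rcases h with h | h
    · exact Or.inl (hlam.subset_child_of_mem hx hc (hS𝒮 hs) hπs h hxs)
    · exact Or.inl (hlam.subset_child_of_mem hx hc (hS𝒮 hs) hσs h hxs)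

lemma Identifies.not_mem_and_mem_of_requested (hid : Identifies 𝒮 S π σ) {x s : Finset α}
    (hx : x ∈ 𝒮) (hxS : x ∉ S) (hreq : Requested S π σ s x) : ¬ (π s ∈ x ∧ σ s ∈ x) := by
  rintro ⟨hπ, hσ⟩
  have hsx : s ⊆ x := (hid.2.2 s hreq.1).2.2 x hx hπ hσ
  exact hxS (subset_antisymm hreq.2.1 hsx ▸ hreq.1)

lemma Identifies.card_inter_child_eq [DecidableEq α]
    (hid : Identifies 𝒮 S π σ) (hlam : IsLaminar 𝒮)
    (hS𝒮 : S ⊆ 𝒮) {c x : Finset α} (hx : x ∈ 𝒮)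
    (hreq : ¬ ∃ s, Requested S π σ s x) (hc : IsChild 𝒮 c x) :
    (S.image π ∩ c).card = (S.image σ ∩ c).card := by
  have mem_iff {f : Finset α → α} (hf : ∀ s ∈ S, f s ∈ s) (hfS : ∀ s ∈ S, f s ∈ c →
      s ⊆ c ∨ Requested S π σ s x) (s : Finset α) (hs : s ∈ S) : f s ∈ S.image f ∩ c ↔ s ⊆ c := by
    rw [mem_inter, and_iff_right (mem_image_of_mem f hs)]
    refine ⟨fun hsc => (hfS s hs hsc).resolve_right fun h => hreq ⟨s, h⟩, fun hsc => hsc (hf s hs)⟩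
  exact card_eq_of_mem_iff hid.1 hid.2.1 inter_subset_left inter_subset_left (· ⊆ c)
    (mem_iff (fun s hs => (hid.2.2 s hs).1)
      fun s hs h => hid.subset_child_or_requested hlam hS𝒮 hx hc hs (Or.inl h))
    (mem_iff (fun s hs => (hid.2.2 s hs).2.1)
      fun s hs h => hid.subset_child_or_requested hlam hS𝒮 hx hc hs (Or.inr h))

lemma Identifies.card_sdiff_inter_child_eq [DecidableEq α]
    (hid : Identifies 𝒮 S π σ) (hlam : IsLaminar 𝒮)
    (hS𝒮 : S ⊆ 𝒮) (hur : UniqueRequest 𝒮 S π σ) {c x s₀ : Finset α} (hx : x ∈ 𝒮)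
    (hreq : Requested S π σ s₀ x) (hσ₀ : σ s₀ ∉ x) (hc : IsChild 𝒮 c x) :
    ((S.image π \ {π s₀}) ∩ c).card = ((S.image σ \ {π s₀}) ∩ c).card := by
  have hs₀ : s₀ ∈ S := hreq.1
  have hxs₀ : x ⊆ s₀ := hreq.2.1
  have hcx : c ⊆ x := hc.2.1.subset
  have hne : ∀ s ⊆ c, s ≠ s₀ := by
    rintro s hsc rfl
    exact hc.2.1.not_subset (hxs₀.trans hsc)
  have eq_of_requested (s : Finset α) (h : Requested S π σ s x) : s = s₀ := hur x hx s s₀ h hreq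
  refine card_eq_of_mem_iff hid.1 hid.2.1 (inter_subset_left.trans sdiff_subset)
    (inter_subset_left.trans sdiff_subset) (· ⊆ c) (fun s hs => ?_) (fun s hs => ?_)
  all_goals
    obtain ⟨hπs, hσs, -⟩ := hid.2.2 s hs
    simp only [mem_inter, mem_sdiff, mem_singleton, mem_image_of_mem _ hs, true_and]
  · constructor
    · rintro ⟨hπne, hπc⟩
      refine (hid.subset_child_or_requested hlam hS𝒮 hx hc hs (Or.inl hπc)).resolve_right ?_
      exact fun h => hπne (congrArg π (eq_of_requested s h))
    · intro hsc
      exact ⟨fun h => hne s hsc (hid.1 hs hs₀ h), hsc hπs⟩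
  · constructor
    · rintro ⟨-, hσc⟩
      refine (hid.subset_child_or_requested hlam hS𝒮 hx hc hs (Or.inr hσc)).resolve_right ?_
      exact fun h => hσ₀ (hcx (eq_of_requested s h ▸ hσc))
    · intro hsc
      refine ⟨fun h => hne s hsc ?_, hsc hσs⟩
      -- `σ s = π s₀` makes `s` both `s`-requested and `s₀`-requested
      exact hur s (hS𝒮 hs) s s₀ ⟨hs, le_rfl, Or.inr hσs⟩
        ⟨hs₀, (hsc.trans hcx).trans hxs₀, Or.inl (h ▸ hσs)⟩

end

theorem stmt_8_general (𝒮 : Finset (Finset α)) (hlam : IsLaminar 𝒮)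
    (S : Finset (Finset α)) (hS : ∀ x ∈ S, x ∈ 𝒮 ∧ ∀ a : α, x ≠ {a})
    (π σ : Finset α → α) (hid : Identifies 𝒮 S π σ) (hur : UniqueRequest 𝒮 S π σ)
    (A B : Finset α) (hA : A = S.image π) (hB : B = S.image σ)
    (x : Finset α) (hx : x ∈ 𝒮) (hxS : x ∉ S) :
    Xor'
      ((¬ ∃ s : Finset α, Requested S π σ s x) ∧
        ∀ c : Finset α, IsChild 𝒮 c x → (A ∩ c).card = (B ∩ c).card)
      ((∃ s : Finset α, Requested S π σ s x) ∧
        ∃ z ∈ (A ∪ B) ∩ x,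
          ∀ c : Finset α, IsChild 𝒮 c x →
            ((A \ {z}) ∩ c).card = ((B \ {z}) ∩ c).card) := by
  subst hA hB
  have hS𝒮 : S ⊆ 𝒮 := fun s hs => (hS s hs).1
  refine xor_not_and_and (fun hreq c hc => hid.card_inter_child_eq hlam hS𝒮 hx hreq hc) ?_
  rintro ⟨s₀, hreq⟩
  have hnot_both := hid.not_mem_and_mem_of_requested hx hxS hreq
  rcases hreq.2.2 with hπ | hσ
  · refine ⟨π s₀, mem_inter.2 ⟨mem_union_left _ (mem_image_of_mem π hreq.1), hπ⟩, fun c hc => ?_⟩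
    exact hid.card_sdiff_inter_child_eq hlam hS𝒮 hur hx hreq (fun h => hnot_both ⟨hπ, h⟩) hc
  · refine ⟨σ s₀, mem_inter.2 ⟨mem_union_right _ (mem_image_of_mem σ hreq.1), hσ⟩, fun c hc => ?_⟩
    exact (hid.swap.card_sdiff_inter_child_eq hlam hS𝒮 hur.swap hx hreq.swap
      (fun h => hnot_both ⟨h, hσ⟩) hc).symm

/-- For a non-singleton member `x ∉ S`, exactly one of the following holds:
(1) `x` is not requested and `|A ∩ c| = |B ∩ c|` for every child `c` of `x`; or
(2) `x` is requested and there is a single leaf `z ∈ (A ∪ B) ∩ x` such that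
`|(A ∖ {z}) ∩ c| = |(B ∖ {z}) ∩ c|` for every child `c` of `x`. -/
theorem stmt_8 (𝒮 : Finset (Finset α)) (hsys : IsSetSystem 𝒮) (hlam : IsLaminar 𝒮)
    (S : Finset (Finset α)) (hS : ∀ x ∈ S, x ∈ 𝒮 ∧ ∀ a : α, x ≠ {a})
    (π σ : Finset α → α) (hid : Identifies 𝒮 S π σ) (hur : UniqueRequest 𝒮 S π σ)
    (A B : Finset α) (hA : A = S.image π) (hB : B = S.image σ)
    (x : Finset α) (hx : x ∈ 𝒮) (hns : ∀ a : α, x ≠ {a}) (hxS : x ∉ S) :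
    Xor'
      ((¬ ∃ s : Finset α, Requested S π σ s x) ∧
        ∀ c : Finset α, IsChild 𝒮 c x → (A ∩ c).card = (B ∩ c).card)
      ((∃ s : Finset α, Requested S π σ s x) ∧
        ∃ z ∈ (A ∪ B) ∩ x,
          ∀ c : Finset α, IsChild 𝒮 c x →
            ((A \ {z}) ∩ c).card = ((B \ {z}) ∩ c).card) :=
  stmt_8_general 𝒮 hlam S hS π σ hid hur A B hA hB x hx hxS
end

section
/- Let (U, 𝒮) be a laminar set system, let A and B be two disjoint subsets of U, and let S and S′ be two sets of non-singleton members of 𝒮. If the bi-colouring (A, B) identifies both S and S′, then S = S′. -/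
variable {α : Type*} [DecidableEq α] [Fintype α]

/-!
Counting colours: if `(A, B)` identifies `S` and `x ∈ 𝒮`, then `S` has exactly
`⌊|x ∩ (A ∪ B)| / 2⌋` members below `x`. The members `s ⊆ x` contribute the two colours
`π s ∈ A` and `σ s ∈ B` inside `x`; any other colour inside `x` belongs to some `s ⊋ x`
(by laminarity) that requests `x`, so unique request and the minimality of `s` leave room
for at most one such colour. These down-counts determine `S` by induction on `x`.
-/

open Finset

section
variable {U : Type*} [DecidableEq U]

theorem card_filter_subset_eq_card_filter_ssubset_add (S : Finset (Finset U)) (x : Finset U) :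
    #{s ∈ S | s ⊆ x} = #{s ∈ S | s ⊂ x} + if x ∈ S then 1 else 0 := by
  have hsplit : {s ∈ S | s ⊆ x} = {s ∈ S | s ⊂ x} ∪ {s ∈ S | s = x} := by
    simp only [subset_iff_ssubset_or_eq, filter_or]
  have hdisj : Disjoint {s ∈ S | s ⊂ x} {s ∈ S | s = x} :=
    disjoint_filter.2 fun _ _ hsx hs => hsx.ne hs
  rw [hsplit, card_union_of_disjoint hdisj, filter_eq']
  split_ifs <;> simp

theorem eq_of_card_filter_subset_eq {S S' : Finset (Finset U)}
    (h : ∀ x ∈ S ∪ S', #{s ∈ S | s ⊆ x} = #{s ∈ S' | s ⊆ x}) : S = S' := by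
  suffices hmem : ∀ x, x ∈ S ∪ S' → (x ∈ S ↔ x ∈ S') by
    ext x
    by_cases hx : x ∈ S ∪ S'
    · exact hmem x hx
    · simp_all
  intro x
  induction x using Finset.strongInduction with
  | H x ih =>
    intro hx
    have hbelow : {s ∈ S | s ⊂ x} = {s ∈ S' | s ⊂ x} := by
      ext s
      simp only [mem_filter, and_congr_left_iff]
      intro hsx
      by_cases hs : s ∈ S ∪ S'
      · exact ih s hsx hs
      · simp_all
    have hcount := h x hx
    rw [card_filter_subset_eq_card_filter_ssubset_add, hbelow,
      card_filter_subset_eq_card_filter_ssubset_add] at hcount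
    split_ifs at hcount <;> simp_all

variable {𝒮 S : Finset (Finset U)} {π σ : Finset U → U} {x s : Finset U}

theorem Identifies.requested_of_not_subset (hlam : IsLaminar 𝒮) (hid : Identifies 𝒮 S π σ)
    (hx : x ∈ 𝒮) (hs : s ∈ S) (hs𝒮 : s ∈ 𝒮) (hsx : ¬ s ⊆ x) (hu : π s ∈ x ∨ σ s ∈ x) :
    Requested S π σ s x := by
  obtain ⟨hπs, hσs, -⟩ := hid.2.2 s hs
  have hxs : x ⊆ s := by
    by_contra hxs
    obtain ⟨u, hux, hus⟩ : ∃ u ∈ x, u ∈ s := hu.elim (⟨_, ·, hπs⟩) (⟨_, ·, hσs⟩)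
    exact hlam x hx s hs𝒮 ⟨⟨u, mem_inter.2 ⟨hux, hus⟩⟩, hxs, hsx⟩
  exact ⟨hs, hxs, hu⟩

theorem Identifies.card_image_union_image (hid : Identifies 𝒮 S π σ)
    (hdisj : Disjoint (S.image π) (S.image σ)) {T : Finset (Finset U)} (hT : T ⊆ S) :
    #(T.image π ∪ T.image σ) = 2 * #T := by
  have hTdisj : Disjoint (T.image π) (T.image σ) :=
    hdisj.mono (image_subset_image hT) (image_subset_image hT)
  rw [card_union_of_disjoint hTdisj, card_image_of_injOn (hid.1.mono (coe_subset.2 hT)),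
    card_image_of_injOn (hid.2.1.mono (coe_subset.2 hT)), two_mul]

theorem Identifies.card_sdiff_image_le_one (hlam : IsLaminar 𝒮) (hS𝒮 : ∀ s ∈ S, s ∈ 𝒮)
    (hid : Identifies 𝒮 S π σ) (hur : UniqueRequest 𝒮 S π σ) (hx : x ∈ 𝒮) :
    #((x ∩ (S.image π ∪ S.image σ)) \
      ({s ∈ S | s ⊆ x}.image π ∪ {s ∈ S | s ⊆ x}.image σ)) ≤ 1 := by
  have hsource : ∀ u ∈ (x ∩ (S.image π ∪ S.image σ)) \
      ({s ∈ S | s ⊆ x}.image π ∪ {s ∈ S | s ⊆ x}.image σ),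
      ∃ s ∈ S, ¬ s ⊆ x ∧ u ∈ x ∧ (π s = u ∨ σ s = u) := by
    intro u hu
    simp only [mem_sdiff, mem_inter, mem_union, mem_image, mem_filter] at hu
    obtain ⟨⟨hux, ⟨s, hs, hsu⟩ | ⟨s, hs, hsu⟩⟩, hnot⟩ := hu
    · exact ⟨s, hs, fun hsx => hnot (.inl ⟨s, ⟨hs, hsx⟩, hsu⟩), hux, .inl hsu⟩
    · exact ⟨s, hs, fun hsx => hnot (.inr ⟨s, ⟨hs, hsx⟩, hsu⟩), hux, .inr hsu⟩
  refine card_le_one.2 fun u hu v hv => ?_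
  obtain ⟨s, hs, hsx, hux, hsu⟩ := hsource u hu
  obtain ⟨t, ht, htx, hvx, htv⟩ := hsource v hv
  have hreq_s := hid.requested_of_not_subset hlam hx hs (hS𝒮 s hs) hsx
    (by rcases hsu with rfl | rfl <;> tauto)
  have hreq_t := hid.requested_of_not_subset hlam hx ht (hS𝒮 t ht) htx
    (by rcases htv with rfl | rfl <;> tauto)
  obtain rfl := hur x hx s t hreq_s hreq_t
  have hone : ¬ (π s ∈ x ∧ σ s ∈ x) := fun ⟨hπ, hσ⟩ => hsx ((hid.2.2 s hs).2.2 x hx hπ hσ)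
  rcases hsu with rfl | rfl <;> rcases htv with rfl | rfl <;> tauto

theorem BicolIdentifies.card_filter_subset {A B : Finset U} (h : BicolIdentifies 𝒮 S A B)
    (hlam : IsLaminar 𝒮) (hS𝒮 : ∀ s ∈ S, s ∈ 𝒮) (hx : x ∈ 𝒮) :
    #{s ∈ S | s ⊆ x} = #(x ∩ (A ∪ B)) / 2 := by
  obtain ⟨hdisj, -, π, σ, hid, hur, rfl, rfl⟩ := h
  have hle := hid.card_sdiff_image_le_one hlam hS𝒮 hur hx
  have hcolours :
      {s ∈ S | s ⊆ x}.image π ∪ {s ∈ S | s ⊆ x}.image σ ⊆ x ∩ (S.image π ∪ S.image σ) := by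
    simp only [union_subset_iff, image_subset_iff, mem_filter, mem_inter, mem_union]
    exact ⟨fun s ⟨hs, hsx⟩ => ⟨hsx (hid.2.2 s hs).1, .inl (mem_image_of_mem π hs)⟩,
      fun s ⟨hs, hsx⟩ => ⟨hsx (hid.2.2 s hs).2.1, .inr (mem_image_of_mem σ hs)⟩⟩
  have hcard := card_sdiff_add_card_eq_card hcolours
  rw [hid.card_image_union_image hdisj (filter_subset _ S)] at hcard
  omega

end

theorem stmt_10_general (𝒮 : Finset (Finset α)) (hlam : IsLaminar 𝒮)
    (A B : Finset α)
    (S S' : Finset (Finset α))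
    (hS : ∀ x ∈ S, x ∈ 𝒮 ∧ ∀ a : α, x ≠ {a})
    (hS' : ∀ x ∈ S', x ∈ 𝒮 ∧ ∀ a : α, x ≠ {a})
    (h1 : BicolIdentifies 𝒮 S A B) (h2 : BicolIdentifies 𝒮 S' A B) :
    S = S' := by
  have hS𝒮 : ∀ s ∈ S, s ∈ 𝒮 := fun s hs => (hS s hs).1
  have hS'𝒮 : ∀ s ∈ S', s ∈ 𝒮 := fun s hs => (hS' s hs).1
  refine eq_of_card_filter_subset_eq fun x hx => ?_
  have hx𝒮 : x ∈ 𝒮 := (mem_union.1 hx).elim (hS𝒮 x) (hS'𝒮 x)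
  rw [h1.card_filter_subset hlam hS𝒮 hx𝒮, h2.card_filter_subset hlam hS'𝒮 hx𝒮]

/-- A bi-colouring identifies at most one set of inner nodes. -/
theorem stmt_10 (𝒮 : Finset (Finset α)) (hsys : IsSetSystem 𝒮) (hlam : IsLaminar 𝒮)
    (A B : Finset α) (hdisj : Disjoint A B)
    (S S' : Finset (Finset α))
    (hS : ∀ x ∈ S, x ∈ 𝒮 ∧ ∀ a : α, x ≠ {a})
    (hS' : ∀ x ∈ S', x ∈ 𝒮 ∧ ∀ a : α, x ≠ {a})
    (h1 : BicolIdentifies 𝒮 S A B) (h2 : BicolIdentifies 𝒮 S' A B) :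
    S = S' :=
  stmt_10_general 𝒮 hlam A B S S' hS hS' h1 h2
end

section
/- Let (U, 𝒮) be a laminar set system. Then there exists a partition of the set of all non-singleton members of 𝒮 (the inner nodes of the laminar tree) into four sets, each of which is thin. -/
variable {α : Type*} [DecidableEq α] [Fintype α]

/-!
Colour an inner node `x` by the pair (parity of the depth of `x`, whether `x` is a child
chosen once and for all for its parent). A parent and its child differ in depth parity. Every
non-root node has a sibling that differs in the second bit: the chosen child of its parent if
`x` is not chosen, and any other sibling if it is; a second child exists because every member
of `𝒮` is nonempty and every singleton is a member. Hence each of the four colour classes is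
thin.
-/

section LaminarTree

variable {𝒮 : Finset (Finset α)} {a : α} {p q x y c : Finset α}

omit [DecidableEq α] in
theorem IsSetSystem.nonempty_of_mem (hsys : IsSetSystem 𝒮) (hx : x ∈ 𝒮) : x.Nonempty :=
  Finset.nonempty_iff_ne_empty.2 (ne_of_mem_of_not_mem hx hsys.1)

omit [Fintype α] in
theorem IsLaminar.subset_or_subset_s13 (hlam : IsLaminar 𝒮) (hx : x ∈ 𝒮) (hy : y ∈ 𝒮)
    (hxy : (x ∩ y).Nonempty) : x ⊆ y ∨ y ⊆ x := by
  by_contra! h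
  exact hlam x hx y hy ⟨hxy, h.1, h.2⟩

omit [DecidableEq α] [Fintype α] in
theorem IsParent.eq (hp : IsParent 𝒮 p x) (hq : IsParent 𝒮 q x) : p = q :=
  (hp.2.2 q hq.1 hq.2.1).antisymm (hq.2.2 p hp.1 hp.2.1)

omit [DecidableEq α] [Fintype α] in
theorem IsParent.isChild (hx : x ∈ 𝒮) (hp : IsParent 𝒮 p x) : IsChild 𝒮 x p := by
  refine ⟨hx, hp.2.1, fun y hy hyp hxy => ?_⟩
  rcases eq_or_ssubset_of_subset hxy with rfl | hxy'
  · rfl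
  · exact absurd (hp.2.2 y hy hxy') (not_subset_of_ssubset hyp)

theorem IsChild.isParent (hsys : IsSetSystem 𝒮) (hlam : IsLaminar 𝒮) (hp : p ∈ 𝒮)
    (hc : IsChild 𝒮 c p) : IsParent 𝒮 p c := by
  refine ⟨hp, hc.2.1, fun y hy hcy => ?_⟩
  obtain ⟨a, ha⟩ := hsys.nonempty_of_mem hc.1
  rcases hlam.subset_or_subset_s13 hp hy ⟨a, Finset.mem_inter.2 ⟨hc.2.1.1 ha, hcy.1 ha⟩⟩ with h | h
  · exact h
  · rcases eq_or_ssubset_of_subset h with rfl | hyp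
    · exact subset_rfl
    · exact absurd (hc.2.2 y hy hyp hcy.1) hcy.ne'

theorem exists_isParent (hsys : IsSetSystem 𝒮) (hlam : IsLaminar 𝒮) (hx : x ∈ 𝒮)
    (hxu : x ≠ Finset.univ) : ∃ p, IsParent 𝒮 p x := by
  have huniv : Finset.univ ∈ 𝒮.filter (x ⊂ ·) :=
    Finset.mem_filter.2 ⟨hsys.2.1, (Finset.subset_univ x).ssubset_of_ne hxu⟩
  obtain ⟨m, hm⟩ := Finset.exists_minimal ⟨_, huniv⟩
  obtain ⟨hm𝒮, hxm⟩ := Finset.mem_filter.1 hm.1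
  refine ⟨m, hm𝒮, hxm, fun y hy hxy => ?_⟩
  obtain ⟨a, ha⟩ := hsys.nonempty_of_mem hx
  rcases hlam.subset_or_subset_s13 hm𝒮 hy ⟨a, Finset.mem_inter.2 ⟨hxm.1 ha, hxy.1 ha⟩⟩ with h | h
  · exact h
  · exact hm.2 (Finset.mem_filter.2 ⟨hy, hxy⟩) h

omit [Fintype α] in
theorem exists_isChild_mem (ha : {a} ∈ 𝒮) (hap : {a} ⊂ p) : ∃ c, IsChild 𝒮 c p ∧ a ∈ c := by
  have hmem : {a} ∈ 𝒮.filter (fun z => a ∈ z ∧ z ⊂ p) :=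
    Finset.mem_filter.2 ⟨ha, Finset.mem_singleton_self a, hap⟩
  obtain ⟨m, ham, hm⟩ := Finset.exists_le_maximal _ hmem
  obtain ⟨hm𝒮, -, hmp⟩ := Finset.mem_filter.1 hm.1
  refine ⟨m, ⟨hm𝒮, hmp, fun y hy hyp hmy => ?_⟩, Finset.singleton_subset_iff.1 ham⟩
  exact (hm.2 (Finset.mem_filter.2 ⟨hy, hmy (Finset.singleton_subset_iff.1 ham), hyp⟩) hmy).antisymm
    hmy

theorem exists_isChild_ne (hsys : IsSetSystem 𝒮) (hx : x ∈ 𝒮) (hp : IsParent 𝒮 p x) :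
    ∃ y, y ≠ x ∧ IsChild 𝒮 y p := by
  obtain ⟨a, hap, hax⟩ := Finset.exists_of_ssubset hp.2.1
  have hap' : {a} ⊂ p := by
    refine (Finset.singleton_subset_iff.2 hap).ssubset_of_ne ?_
    rintro rfl
    exact hsys.nonempty_of_mem hx |>.ne_empty (Finset.ssubset_singleton_iff.1 hp.2.1)
  obtain ⟨c, hc, hac⟩ := exists_isChild_mem (hsys.2.2 a) hap'
  exact ⟨c, fun hcx => hax (hcx ▸ hac), hc⟩

end LaminarTree

section Colouring

variable (𝒮 : Finset (Finset α)) {p x : Finset α}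

def depth (x : Finset α) : ℕ :=
  (𝒮.filter (x ⊂ ·)).card

omit [Fintype α] in
theorem depth_eq_of_isParent (hp : IsParent 𝒮 p x) : depth 𝒮 x = depth 𝒮 p + 1 := by
  have hset : 𝒮.filter (x ⊂ ·) = insert p (𝒮.filter (p ⊂ ·)) := by
    ext y
    simp only [Finset.mem_filter, Finset.mem_insert]
    constructor
    · rintro ⟨hy, hxy⟩
      rcases eq_or_ssubset_of_subset (hp.2.2 y hy hxy) with rfl | hpy
      · exact Or.inl rfl
      · exact Or.inr ⟨hy, hpy⟩
    · rintro (rfl | ⟨hy, hpy⟩)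
      · exact ⟨hp.1, hp.2.1⟩
      · exact ⟨hy, hp.2.1.trans hpy⟩
  rw [depth, hset, Finset.card_insert_of_notMem (by simp), depth]

noncomputable def chosenChild (p : Finset α) : Finset α :=
  Classical.epsilon (IsChild 𝒮 · p)

def IsChosenChild (x : Finset α) : Prop :=
  ∃ p, IsParent 𝒮 p x ∧ chosenChild 𝒮 p = x

open Classical in
noncomputable def colour (x : Finset α) : Bool × Bool :=
  ((depth 𝒮 x).bodd, decide (IsChosenChild 𝒮 x))

variable {𝒮}

omit [DecidableEq α] [Fintype α] in
theorem chosenChild_isChild {c : Finset α} (hc : IsChild 𝒮 c p) :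
    IsChild 𝒮 (chosenChild 𝒮 p) p :=
  Classical.epsilon_spec (p := (IsChild 𝒮 · p)) ⟨c, hc⟩

omit [DecidableEq α] [Fintype α] in
theorem isChosenChild_iff (hp : IsParent 𝒮 p x) : IsChosenChild 𝒮 x ↔ chosenChild 𝒮 p = x :=
  ⟨fun ⟨_, hq, hqx⟩ => hq.eq hp ▸ hqx, fun h => ⟨p, hp, h⟩⟩

omit [Fintype α] in
theorem colour_ne_of_isParent (hp : IsParent 𝒮 p x) : colour 𝒮 p ≠ colour 𝒮 x := by
  simp [colour, depth_eq_of_isParent 𝒮 hp]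

theorem exists_sibling_colour_ne (hsys : IsSetSystem 𝒮) (hlam : IsLaminar 𝒮) (hx : x ∈ 𝒮)
    (hxu : x ≠ Finset.univ) :
    ∃ y p, IsChild 𝒮 x p ∧ IsChild 𝒮 y p ∧ colour 𝒮 y ≠ colour 𝒮 x := by
  obtain ⟨p, hp⟩ := exists_isParent hsys hlam hx hxu
  have hxp := hp.isChild hx
  suffices ∃ y, IsChild 𝒮 y p ∧ (IsChosenChild 𝒮 y ↔ ¬ IsChosenChild 𝒮 x) by
    obtain ⟨y, hyp, hy⟩ := this
    refine ⟨y, p, hxp, hyp, fun h => ?_⟩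
    have := congrArg Prod.snd h
    simp only [colour, decide_eq_decide] at this
    tauto
  have hchild {y} (hyp : IsChild 𝒮 y p) : IsParent 𝒮 p y := hyp.isParent hsys hlam hp.1
  by_cases hchosen : chosenChild 𝒮 p = x
  · obtain ⟨y, hyx, hyp⟩ := exists_isChild_ne hsys hx hp
    refine ⟨y, hyp, ?_⟩
    rw [isChosenChild_iff (hchild hyp), isChosenChild_iff hp, hchosen]
    exact ⟨fun h => absurd h.symm hyx, fun h => absurd rfl h⟩
  · refine ⟨chosenChild 𝒮 p, chosenChild_isChild hxp, ?_⟩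
    rw [isChosenChild_iff (hchild (chosenChild_isChild hxp)), isChosenChild_iff hp]
    exact ⟨fun _ => hchosen, fun _ => rfl⟩

end Colouring

omit [DecidableEq α] in
theorem Thin.of_forall_colour_eq {ι : Type*} {𝒮 X : Finset (Finset α)} (col : Finset α → ι)
    (hpar : ∀ x ∈ 𝒮, ∀ p, IsParent 𝒮 p x → col p ≠ col x)
    (hsib : ∀ x ∈ 𝒮, x ≠ Finset.univ →
      ∃ y p, IsChild 𝒮 x p ∧ IsChild 𝒮 y p ∧ col y ≠ col x)
    (hX𝒮 : X ⊆ 𝒮) (hX : ∀ x ∈ X, ∀ y ∈ X, col x = col y) : Thin 𝒮 X := by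
  intro x hx hxu
  refine ⟨fun p hp hpX => hpar x (hX𝒮 hx) p hp (hX p hpX x hx), ?_⟩
  obtain ⟨y, p, hxp, hyp, hyx⟩ := hsib x (hX𝒮 hx) hxu
  exact ⟨y, p, fun h => hyx (congrArg col h), hxp, hyp, fun hyX => hyx (hX y hyX x hx)⟩

/-- The inner nodes of the laminar tree can be partitioned into four thin sets. -/
theorem stmt_13 (𝒮 : Finset (Finset α)) (hsys : IsSetSystem 𝒮) (hlam : IsLaminar 𝒮) :
    ∃ X : Fin 4 → Finset (Finset α),
      (∀ i : Fin 4, ∀ x ∈ X i, x ∈ 𝒮 ∧ ∀ a : α, x ≠ {a}) ∧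
      (∀ i j : Fin 4, i ≠ j → Disjoint (X i) (X j)) ∧
      (∀ x ∈ 𝒮, (∀ a : α, x ≠ {a}) → ∃ i : Fin 4, x ∈ X i) ∧
      (∀ i : Fin 4, Thin 𝒮 (X i)) := by
  classical
  let e : Bool × Bool ≃ Fin 4 := Fintype.equivFinOfCardEq rfl
  let X (i : Fin 4) := 𝒮.filter fun x => (∀ a : α, x ≠ {a}) ∧ e (colour 𝒮 x) = i
  refine ⟨X, fun i x hx => ?_, fun i j hij => ?_, fun x hx hns => ?_, fun i => ?_⟩
  · exact ⟨(Finset.mem_filter.1 hx).1, (Finset.mem_filter.1 hx).2.1⟩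
  · refine Finset.disjoint_left.2 fun x hxi hxj => hij ?_
    exact (Finset.mem_filter.1 hxi).2.2.symm.trans (Finset.mem_filter.1 hxj).2.2
  · exact ⟨e (colour 𝒮 x), Finset.mem_filter.2 ⟨hx, hns, rfl⟩⟩
  · refine Thin.of_forall_colour_eq (colour 𝒮) (fun x _ p hp => colour_ne_of_isParent hp)
      (fun x hx hxu => exists_sibling_colour_ne hsys hlam hx hxu) (Finset.filter_subset _ _)
      fun x hx y hy => e.injective ?_
    exact (Finset.mem_filter.1 hx).2.2.trans (Finset.mem_filter.1 hy).2.2.symm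
end

section
/- Let (U, ℬ) be a laminar bipartition system and let a ∈ U. Then the set system (U, 𝒮ₐ) is laminar, where 𝒮ₐ := {X ⊆ U : a ∉ X and {X, U∖X} ∈ ℬ} ∪ {{a}, U}. -/
variable {α : Type*} [DecidableEq α] [Fintype α]

/-- A bipartition system, represented by the (complement-closed) family of sides of its
bipartitions: `{∅, univ} ∉ ℬ` and all bipartitions `{{a}, univ \ {a}}` are in `ℬ`. -/
def IsBipartitionSystem (ℬ : Finset (Finset α)) : Prop :=
  (∀ X ∈ ℬ, Xᶜ ∈ ℬ) ∧ (∅ : Finset α) ∉ ℬ ∧ ∀ a : α, ({a} : Finset α) ∈ ℬ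

/-- Two bipartitions (given by sides `X` and `Y`) overlap:
all four sets `X ∩ Y`, `X ∩ Yᶜ`, `Xᶜ ∩ Y`, `Xᶜ ∩ Yᶜ` are non-empty. -/
def BipOverlap (X Y : Finset α) : Prop :=
  (X ∩ Y).Nonempty ∧ (X ∩ Yᶜ).Nonempty ∧ (Xᶜ ∩ Y).Nonempty ∧ (Xᶜ ∩ Yᶜ).Nonempty

/-- A bipartition system is laminar when no two of its bipartitions overlap. -/
def IsLaminarBip (ℬ : Finset (Finset α)) : Prop :=
  ∀ X ∈ ℬ, ∀ Y ∈ ℬ, ¬ BipOverlap X Y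

/-- The set system `𝒮ₐ = {X : a ∉ X ∧ {X, U ∖ X} ∈ ℬ} ∪ {{a}, U}`. -/
def Sa (ℬ : Finset (Finset α)) (a : α) : Finset (Finset α) :=
  ℬ.filter (fun X => a ∉ X) ∪ {({a} : Finset α), Finset.univ}

/-- For a laminar bipartition system `(U, ℬ)` and `a ∈ U`, the set system `(U, 𝒮ₐ)`
is laminar. -/
theorem stmt_16 (ℬ : Finset (Finset α)) (hb : IsBipartitionSystem ℬ)
    (hlam : IsLaminarBip ℬ) (a : α) :
    IsLaminar (Sa ℬ a) := by
  intro X hX Y hY hov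
  obtain ⟨hne, hXY, hYX⟩ := hov
  simp only [Sa, Finset.mem_union, Finset.mem_filter, Finset.mem_insert,
    Finset.mem_singleton] at hX hY
  rcases hX with ⟨hXB, haX⟩ | hX | hX
  · rcases hY with ⟨hYB, haY⟩ | hY | hY
    · have := hlam X hXB Y hYB
      simp only [BipOverlap, not_and_or] at this
      rcases this with h | h | h | h
      · exact (Finset.not_nonempty_iff_eq_empty.mpr (by
          rwa [Finset.not_nonempty_iff_eq_empty] at h)) hne
      · rw [Finset.not_nonempty_iff_eq_empty] at h
        exact hXY fun x hx => by
          by_contra hxY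
          exact Finset.notMem_empty x (h ▸ Finset.mem_inter.mpr
            ⟨hx, Finset.mem_compl.mpr hxY⟩)
      · rw [Finset.not_nonempty_iff_eq_empty] at h
        exact hYX fun y hy => by
          by_contra hyX
          exact Finset.notMem_empty y (h ▸ Finset.mem_inter.mpr
            ⟨Finset.mem_compl.mpr hyX, hy⟩)
      · rw [Finset.not_nonempty_iff_eq_empty] at h
        exact Finset.notMem_empty a (h ▸ Finset.mem_inter.mpr
          ⟨Finset.mem_compl.mpr haX, Finset.mem_compl.mpr haY⟩)
    · subst hY
      obtain ⟨x, hx⟩ := hne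
      rw [Finset.mem_inter, Finset.mem_singleton] at hx
      exact haX (hx.2 ▸ hx.1)
    · subst hY; exact hXY (Finset.subset_univ X)
  · subst hX
    obtain ⟨x, hx⟩ := hne
    rw [Finset.mem_inter, Finset.mem_singleton] at hx
    exact hXY (Finset.singleton_subset_iff.mpr (hx.1 ▸ hx.2))
  · subst hX; exact hYX (Finset.subset_univ Y)
end

section
/- Let G be an undirected graph (a directed graph whose edge relation is symmetric) and let M and M′ be two overlapping modules of G. Then the symmetric difference M △ M′ is a module of G; together with closure under union, intersection, and differences, this shows that the family of non-empty modules of an undirected graph is partitive. -/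
/-! By symmetry of `E` only out-edges matter, and for a vertex `u` outside `M △ M'` it suffices
to compare each `E u v`, `v ∈ M △ M'`, with one reference vertex. If `u ∉ M ∪ M'`, the modules `M`
and `M'` each see `u` uniformly, and they share a vertex of `M ∩ M'`. If `u ∈ M ∩ M'`, then for
`x ∈ M \ M'` and `y ∈ M' \ M` the chain `E u x ↔ E x y ↔ E y u` (`x` sees `M'` uniformly, `y`
sees `M` uniformly) links the two halves. -/

variable {V : Type*} [Fintype V]

/-- `M` is a module of the directed graph with edge relation `E`. -/
def IsModule (E : V → V → Prop) (M : Set V) : Prop :=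
  ∀ u ∉ M, ∀ v ∈ M, ∀ w ∈ M, (E u v ↔ E u w) ∧ (E v u ↔ E w u)

/-- Two sets overlap: non-disjoint and neither contains the other. -/
def SetOverlap (X Y : Set V) : Prop :=
  (X ∩ Y).Nonempty ∧ ¬ X ⊆ Y ∧ ¬ Y ⊆ X

namespace IsModule

variable {α : Type*} {E : α → α → Prop} {M M' : Set α}

theorem of_symmetric (hsym : Symmetric E)
    (h : ∀ u ∉ M, ∃ r, ∀ v ∈ M, E u v ↔ E u r) : IsModule E M := by
  intro u hu v hv w hw
  obtain ⟨r, hr⟩ := h u hu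
  have hswap : ∀ x y, E x y ↔ E y x := fun _ _ => ⟨fun h => hsym h, fun h => hsym h⟩
  have hvw : E u v ↔ E u w := (hr v hv).trans (hr w hw).symm
  exact ⟨hvw, (hswap v u).trans (hvw.trans (hswap u w))⟩

theorem adj_iff_of_mem_inter (hM : IsModule E M) (hM' : IsModule E M') (hsym : Symmetric E)
    {u x y : α} (hu : u ∈ M ∩ M') (hx : x ∈ M \ M') (hy : y ∈ M' \ M) :
    E u x ↔ E u y :=
  calc E u x ↔ E x u := ⟨fun h => hsym h, fun h => hsym h⟩
    _ ↔ E x y := (hM' x hx.2 u hu.2 y hy.1).1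
    _ ↔ E y x := ⟨fun h => hsym h, fun h => hsym h⟩
    _ ↔ E y u := (hM y hy.2 x hx.1 u hu.1).1
    _ ↔ E u y := ⟨fun h => hsym h, fun h => hsym h⟩

theorem adj_iff_of_notMem_union (hM : IsModule E M) (hM' : IsModule E M')
    {u a v : α} (hu : u ∉ M ∪ M') (ha : a ∈ M ∩ M') (hv : v ∈ M ∪ M') :
    E u v ↔ E u a := by
  rw [Set.mem_union, not_or] at hu
  rcases hv with hv | hv
  · exact (hM u hu.1 v hv a ha.1).1
  · exact (hM' u hu.2 v hv a ha.2).1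

end IsModule

/-- In an undirected graph the symmetric difference of two overlapping modules is a
module: the family of non-empty modules of an undirected graph is partitive. -/
theorem stmt_18 (E : V → V → Prop) (hsym : Symmetric E) (M M' : Set V)
    (hM : IsModule E M) (hM' : IsModule E M') (hover : SetOverlap M M') :
    IsModule E ((M \ M') ∪ (M' \ M)) := by
  obtain ⟨⟨a, ha⟩, hMM', hM'M⟩ := hover
  obtain ⟨c, hc⟩ := Set.not_subset.mp hMM'
  obtain ⟨b, hb⟩ := Set.not_subset.mp hM'M
  refine IsModule.of_symmetric hsym fun u hu => ?_
  by_cases huM : u ∈ M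
  · have hu' : u ∈ M ∩ M' := ⟨huM, by by_contra h; exact hu (Or.inl ⟨huM, h⟩)⟩
    refine ⟨c, fun v hv => ?_⟩
    rcases hv with hv | hv
    · exact (hM.adj_iff_of_mem_inter hM' hsym hu' hv hb).trans
        (hM.adj_iff_of_mem_inter hM' hsym hu' hc hb).symm
    · exact (hM.adj_iff_of_mem_inter hM' hsym hu' hc hv).symm
  · have hu' : u ∉ M ∪ M' := by
      rintro (h | h)
      exacts [huM h, hu (Or.inr ⟨h, huM⟩)]
    exact ⟨a, fun v hv => hM.adj_iff_of_notMem_union hM' hu' ha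
      (hv.elim (fun h => Or.inl h.1) (fun h => Or.inr h.1))⟩
end
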